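/- Let F be a formal group law over a commutative ring R, let A be a finite abelian group, and let ℓ : A → R be a function with ℓ(0)=0, each ℓ(a) nilpotent, and ℓ(a+b) = F(ℓ(a),ℓ(b)) for all a,b ∈ A. Then the discriminant ∏_{a≠b ∈ A}(ℓ(a)-ℓ(b)) equals a unit of R times ∏_{0≠c ∈ A} ℓ(c)^{|A|}. -/

import Mathlib

open Finset

noncomputable section

namespace FGL

variable {R : Type*} [CommRing R]

/-- The monomial index `x^i y^j` for two-variable power series. -/
def mono (i j : ℕ) : Fin 2 →₀ ℕ := Finsupp.single 0 i + Finsupp.single 1 j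

/-- Substitute `(g(t), t)` into a two-variable power series `F`; this is the honest
substitution `F(g(t), t)` whenever `g` has zero constant term. -/
def subst2 (F : MvPowerSeries (Fin 2) R) (g : PowerSeries R) : PowerSeries R :=
  PowerSeries.mk fun n => ∑ i ∈ Finset.range (n + 1), ∑ j ∈ Finset.range (n + 1),
    MvPowerSeries.coeff (mono i j) F * PowerSeries.coeff (n - j) (g ^ i)

/-- The three-variable power series `F(F(x,y),z)` (for `F` with zero constant term). -/
def assocLeft (F : MvPowerSeries (Fin 2) R) : MvPowerSeries (Fin 3) R :=
  fun m => ∑ i ∈ Finset.range (m 0 + m 1 + 1),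
    MvPowerSeries.coeff (mono i (m 2)) F *
      MvPowerSeries.coeff (mono (m 0) (m 1)) (F ^ i)

/-- The three-variable power series `F(x,F(y,z))` (for `F` with zero constant term). -/
def assocRight (F : MvPowerSeries (Fin 2) R) : MvPowerSeries (Fin 3) R :=
  fun m => ∑ j ∈ Finset.range (m 1 + m 2 + 1),
    MvPowerSeries.coeff (mono (m 0) j) F *
      MvPowerSeries.coeff (mono (m 1) (m 2)) (F ^ j)

/-- A (one-dimensional, commutative) formal group law over `R`: a two-variable power
series `F(x,y)` with `F(x,0)=x`, `F(0,y)=y`, `F(x,y)=F(y,x)` and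
`F(F(x,y),z)=F(x,F(y,z))`. -/
structure FormalGroupLaw (R : Type*) [CommRing R] where
  F : MvPowerSeries (Fin 2) R
  left_unit : ∀ i : ℕ, MvPowerSeries.coeff (mono i 0) F = if i = 1 then 1 else 0
  right_unit : ∀ j : ℕ, MvPowerSeries.coeff (mono 0 j) F = if j = 1 then 1 else 0
  comm : ∀ i j : ℕ, MvPowerSeries.coeff (mono i j) F = MvPowerSeries.coeff (mono j i) F
  assoc : assocLeft F = assocRight F

/-- The `n`-series `[n](t)` of a formal group law, defined by `[0](t) = 0` and
`[n+1](t) = F([n](t), t)`. -/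
def nSeries (Φ : FormalGroupLaw R) : ℕ → PowerSeries R
  | 0 => 0
  | n + 1 => subst2 Φ.F (nSeries Φ n)

open Classical in
/-- Evaluation of a power series at a nilpotent element (the sum is finite). -/
def nilEval (f : PowerSeries R) (a : R) : R :=
  if h : IsNilpotent a then ∑ i ∈ Finset.range h.choose, PowerSeries.coeff i f * a ^ i
  else 0

open Classical in
/-- Evaluation of a two-variable power series at a pair of nilpotent elements. -/
def nilEval₂ (F : MvPowerSeries (Fin 2) R) (a b : R) : R :=
  if h : ∃ N, a ^ N = 0 ∧ b ^ N = 0 then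
    ∑ i ∈ Finset.range h.choose, ∑ j ∈ Finset.range h.choose,
      MvPowerSeries.coeff (mono i j) F * a ^ i * b ^ j
  else 0

open Classical in
/-- The one-variable power series `x ↦ F(x, c)` for `c` nilpotent. -/
def addConst (F : MvPowerSeries (Fin 2) R) (c : R) : PowerSeries R :=
  if h : IsNilpotent c then
    PowerSeries.mk fun n => ∑ j ∈ Finset.range h.choose,
      MvPowerSeries.coeff (mono n j) F * c ^ j
  else 0

/-- A homomorphism from a finite abelian group `A` to the formal group of `F`:
a function with nilpotent values, sending `0` to `0` and `+` to formal addition. -/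
def IsHom (F : MvPowerSeries (Fin 2) R) {A : Type*} [AddCommGroup A] (ℓ : A → R) : Prop :=
  ℓ 0 = 0 ∧ (∀ a, IsNilpotent (ℓ a)) ∧ ∀ a b : A, ℓ (a + b) = nilEval₂ F (ℓ a) (ℓ b)

end FGL

/-!
Since `F(x,0) = x` and `F(0,y) = y`, every monomial of `F(x,y) - x - y` is divisible by `xy`, so
`F(x,y) = x + y + xy·s` at nilpotent arguments. Writing `ℓ a = F(ℓ(a-b), ℓ b)` gives
`ℓ a - ℓ b = ℓ(a-b)·(1 + ℓ b·s)`, and the second factor is a unit because `ℓ b` is nilpotent.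
So the discriminant is a unit times `∏_{a≠b} ℓ(a-b)`, and the substitution `(a,b) ↦ (a-b,b)`
shows that each `ℓ c` with `c ≠ 0` occurs there exactly `|A|` times.
-/

theorem prod_univ_offDiag_sub {A M : Type*} [AddGroup A] [Fintype A] [DecidableEq A]
    [CommMonoid M] (f : A → M) :
    ∏ p ∈ univ.offDiag, f (p.1 - p.2) = ∏ c ∈ univ.filter (· ≠ 0), f c ^ Fintype.card A := by
  calc ∏ p ∈ univ.offDiag, f (p.1 - p.2)
      = ∏ q ∈ univ.filter (· ≠ 0) ×ˢ (univ : Finset A), f q.1 := by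
        refine prod_nbij' (fun p => (p.1 - p.2, p.2)) (fun q => (q.1 + q.2, q.2))
          ?_ ?_ ?_ ?_ fun _ _ => rfl
        · simp +contextual [sub_eq_zero]
        · simp +contextual
        · simp
        · simp
    _ = ∏ c ∈ univ.filter (· ≠ 0), f c ^ Fintype.card A := by
        simp only [prod_product, prod_const, card_univ]

namespace FGL

variable {R : Type*} [CommRing R]

theorem nilEval₂_eq_sum {F : MvPowerSeries (Fin 2) R} {x y : R} {N : ℕ}
    (hx : x ^ N = 0) (hy : y ^ N = 0) :
    nilEval₂ F x y =
      ∑ i ∈ range N, ∑ j ∈ range N, MvPowerSeries.coeff (mono i j) F * x ^ i * y ^ j := by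
  set S : ℕ → R := fun M =>
    ∑ i ∈ range M, ∑ j ∈ range M, MvPowerSeries.coeff (mono i j) F * x ^ i * y ^ j
  have stable {K M : ℕ} (hxK : x ^ K = 0) (hyK : y ^ K = 0) (hKM : K ≤ M) : S K = S M := by
    simp only [S, ← sum_product']
    refine sum_subset (product_subset_product (range_subset_range.2 hKM)
      (range_subset_range.2 hKM)) fun ⟨i, j⟩ _ hij => ?_
    rcases le_or_gt K i with hi | hi
    · simp [pow_eq_zero_of_le hi hxK]
    · have hj : K ≤ j := by simp_all
      simp [pow_eq_zero_of_le hj hyK]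
  have h : ∃ N, x ^ N = 0 ∧ y ^ N = 0 := ⟨N, hx, hy⟩
  obtain ⟨hx₀, hy₀⟩ := h.choose_spec
  rw [nilEval₂, dif_pos h]
  exact (stable hx₀ hy₀ (Nat.le_add_right _ N)).trans
    (stable hx hy (Nat.le_add_left N _)).symm

theorem nilEval₂_eq_add_add_mul (Φ : FormalGroupLaw R) {x y : R} (hx : IsNilpotent x)
    (hy : IsNilpotent y) : ∃ s : R, nilEval₂ Φ.F x y = x + y + x * y * s := by
  obtain ⟨n, hn⟩ := hx
  obtain ⟨m, hm⟩ := hy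
  -- `N + 1 ≥ 2`, so the linear terms `x` and `y` of `F` lie in the truncated sum.
  set N := n + m + 1
  rw [nilEval₂_eq_sum (N := N + 1) (pow_eq_zero_of_le (by omega) hn)
    (pow_eq_zero_of_le (by omega) hm)]
  have row : ∑ j ∈ range (N + 1), MvPowerSeries.coeff (mono 0 j) Φ.F * x ^ 0 * y ^ j = y := by
    simp [Φ.right_unit, N]
  have col :
      ∑ i ∈ range N, MvPowerSeries.coeff (mono (i + 1) 0) Φ.F * x ^ (i + 1) * y ^ 0 = x := by
    simp [Φ.left_unit, N]
  have shift (a : R) (i j : ℕ) : a * x ^ (i + 1) * y ^ (j + 1) = x * y * (a * x ^ i * y ^ j) := by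
    ring
  refine ⟨∑ i ∈ range N, ∑ j ∈ range N,
    MvPowerSeries.coeff (mono (i + 1) (j + 1)) Φ.F * x ^ i * y ^ j, ?_⟩
  rw [sum_range_succ', row, sum_congr rfl fun i _ => sum_range_succ' _ N, sum_add_distrib, col]
  simp only [shift, ← mul_sum]
  ring

theorem IsHom.associated_sub {Φ : FormalGroupLaw R} {A : Type*} [AddCommGroup A] {ℓ : A → R}
    (hℓ : IsHom Φ.F ℓ) (a b : A) : Associated (ℓ (a - b)) (ℓ a - ℓ b) := by
  obtain ⟨-, hnil, hadd⟩ := hℓ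
  obtain ⟨s, hs⟩ := nilEval₂_eq_add_add_mul Φ (hnil (a - b)) (hnil b)
  have hunit : IsUnit (1 + ℓ b * s) :=
    ((Commute.all _ _).isNilpotent_mul_right (hnil b)).isUnit_one_add
  refine ⟨hunit.unit, ?_⟩
  rw [hunit.unit_spec, ← sub_add_cancel a b, hadd, hs, sub_add_cancel]
  ring

end FGL

open FGL in
/-- for a homomorphism `ℓ : A → R` from a finite abelian group to the formal
group of `F`, the discriminant `∏_{a≠b}(ℓ(a)-ℓ(b))` equals a unit times
`∏_{0≠c} ℓ(c)^{|A|}`. -/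
theorem discriminant_eq_unit_mul {R : Type*} [CommRing R] (Φ : FormalGroupLaw R)
    {A : Type*} [AddCommGroup A] [Fintype A] [DecidableEq A]
    (ℓ : A → R) (hℓ : IsHom Φ.F ℓ) :
    ∃ u : Rˣ,
      ∏ p ∈ Finset.univ.offDiag, (ℓ p.1 - ℓ p.2) =
        (u : R) * ∏ c ∈ Finset.univ.filter (fun c : A => c ≠ 0), ℓ c ^ Fintype.card A := by
  obtain ⟨u, hu⟩ := Associated.prod univ.offDiag (fun p => ℓ (p.1 - p.2))
    (fun p => ℓ p.1 - ℓ p.2) fun p _ => hℓ.associated_sub p.1 p.2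
  exact ⟨u, by rw [← hu, prod_univ_offDiag_sub, mul_comm]⟩
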